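/- arXiv:1210.1273 — 4 statements merged into one kernel-verified Lean document; each statement's English description precedes it below -/
import Mathlib

section
/- Let G be a Kuramoto graph on vertex set V with frequencies ω and mean ω̄, and suppose ν₁ ∈ V is a cut-vertex: V ∖ {ν₁} is the disjoint union of two nonempty sets S and S′ with no edge of G joining a vertex of S to a vertex of S′. Let G₁ be the induced subgraph of G on S ∪ {ν₁}, with the same frequencies on S but with the frequency of ν₁ replaced by ω_x = ω̄ − Σ_{i∈S} (ω_i − ω̄); let G₂ be the induced subgraph of G on S′ ∪ {ν₁}, with the same frequencies on S′ but with the frequency of ν₁ replaced by ω_y = ω̄ − Σ_{i∈S′} (ω_i − ω̄). (Both G₁ and G₂ then have mean frequency ω̄.) Then for every k ∈ ℝ, G has a frequency fixed point at coupling k if and only if both G₁ and G₂ have frequency fixed points at coupling k. -/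
open scoped Classical

/-- The mean frequency ω̄ of a Kuramoto graph. -/
noncomputable def kuramotoMean {V : Type*} [Fintype V] (ω : V → ℝ) : ℝ :=
  (∑ i, ω i) / (Fintype.card V : ℝ)

/-- `φ` is a frequency fixed point for the Kuramoto graph `(G, ω)` at coupling `k`:
for every vertex `i`, `ω i - ω̄ + k * ∑_{j ~ i} sin (φ j - φ i) = 0`. -/
def IsFreqFixedPoint {V : Type*} [Fintype V] (G : SimpleGraph V)
    (ω : V → ℝ) (k : ℝ) (φ : V → ℝ) : Prop :=
  ∀ i, ω i - kuramotoMean ω +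
    k * ∑ j ∈ Finset.univ.filter (fun j => G.Adj i j), Real.sin (φ j - φ i) = 0

/-!
The left-hand sides of the fixed-point equations always sum to zero: the deviations `ω i - ω̄`
do, and the coupling terms cancel in pairs because `sin` is odd. Hence the equation at any one
vertex follows from the others. On `S ∪ {ν₁}` with the frequency `ω_x` at `ν₁` the mean is
still `ω̄`, and since no edge leaves `S` except towards `ν₁`, the equations at `S` are those of
`G`; so a fixed point of `G` restricts to fixed points of `G₁` and `G₂`. Conversely, phases
are only defined up to a common shift, so fixed points of `G₁` and `G₂` can be made to agree
at `ν₁` and glued; the glued phases satisfy the equations of `G` at all vertices but `ν₁`,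
hence at `ν₁` as well.
-/

open Finset

section Finset

variable {V : Type*}

theorem sum_sum_sin_adj_eq_zero (G : SimpleGraph V) (φ : V → ℝ) (s : Finset V) :
    ∑ i ∈ s, ∑ j ∈ s.filter (G.Adj i), Real.sin (φ j - φ i) = 0 := by
  simp only [sum_filter]
  have hswap : ∑ i ∈ s, ∑ j ∈ s, (if G.Adj i j then Real.sin (φ j - φ i) else 0) =
      ∑ i ∈ s, ∑ j ∈ s, -(if G.Adj i j then Real.sin (φ j - φ i) else 0) := by
    rw [sum_comm]
    refine sum_congr rfl fun i _ => sum_congr rfl fun j _ => ?_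
    by_cases hij : G.Adj i j
    · rw [if_pos hij, if_pos hij.symm, ← neg_sub, Real.sin_neg]
    · rw [if_neg hij, if_neg (mt G.adj_symm hij), neg_zero]
  simp only [sum_neg_distrib] at hswap
  linarith

theorem sum_filter_induce_adj {M : Type*} [AddCommMonoid M] (G : SimpleGraph V)
    (s : Finset V) (a : (s : Set V)) (f : V → M) :
    ∑ j ∈ univ.filter ((G.induce (s : Set V)).Adj a), f j = ∑ j ∈ s.filter (G.Adj a), f j := by
  rw [sum_filter, sum_filter]
  exact (sum_subtype s (fun _ => mem_coe.symm) fun j => if G.Adj a j then f j else 0).symm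

end Finset

section Kuramoto

variable {V : Type*} [Fintype V]

theorem IsFreqFixedPoint.add_const {G : SimpleGraph V} {ω : V → ℝ} {k : ℝ} {φ : V → ℝ}
    (h : IsFreqFixedPoint G ω k φ) (c : ℝ) : IsFreqFixedPoint G ω k (fun i => φ i + c) := by
  intro i
  simpa using h i

theorem sum_sub_kuramotoMean_eq_zero [Nonempty V] (ω : V → ℝ) :
    ∑ i, (ω i - kuramotoMean ω) = 0 := by
  have hcard : (Fintype.card V : ℝ) ≠ 0 := Nat.cast_ne_zero.mpr Fintype.card_ne_zero
  rw [sum_sub_distrib, sum_const, card_univ, nsmul_eq_mul, kuramotoMean]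
  field_simp
  ring

theorem isFreqFixedPoint_of_forall_ne (G : SimpleGraph V) (ω : V → ℝ) (k : ℝ) (φ : V → ℝ)
    (ν : V) (h : ∀ i ≠ ν, ω i - kuramotoMean ω +
      k * ∑ j ∈ univ.filter (G.Adj i), Real.sin (φ j - φ i) = 0) :
    IsFreqFixedPoint G ω k φ := by
  have : Nonempty V := ⟨ν⟩
  have htotal : ∑ i, (ω i - kuramotoMean ω +
      k * ∑ j ∈ univ.filter (G.Adj i), Real.sin (φ j - φ i)) = 0 := by
    rw [sum_add_distrib, ← mul_sum, sum_sub_kuramotoMean_eq_zero, sum_sum_sin_adj_eq_zero,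
      mul_zero, add_zero]
  intro i
  by_cases hi : i = ν
  · subst hi
    rwa [sum_eq_single_of_mem i (mem_univ i) fun j _ hj => h j hj] at htotal
  · exact h i hi

end Kuramoto

section InducedSubgraph

variable {V : Type*} [Fintype V] [DecidableEq V]

noncomputable def branchFrequency (ω : V → ℝ) (ν : V) (S : Finset V) :
    ((insert ν S : Finset V) : Set V) → ℝ :=
  fun i => if (i : V) = ν then kuramotoMean ω - ∑ j ∈ S, (ω j - kuramotoMean ω) else ω i

theorem kuramotoMean_branchFrequency (ω : V → ℝ) {ν : V} {S : Finset V} (hν : ν ∉ S) :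
    kuramotoMean (branchFrequency ω ν S) = kuramotoMean ω := by
  set m := kuramotoMean ω
  have hcard : (Fintype.card ((insert ν S : Finset V) : Set V) : ℝ) = #S + 1 := by
    simp [card_insert_of_notMem hν]
  have hsum : ∑ i, branchFrequency ω ν S i = (#S + 1) * m := by
    unfold branchFrequency
    rw [← sum_subtype (insert ν S) (fun _ => mem_coe.symm)
      fun i => if i = ν then m - ∑ j ∈ S, (ω j - m) else ω i]
    rw [sum_insert hν, if_pos rfl,
      sum_congr rfl fun i hi => if_neg (ne_of_mem_of_not_mem hi hν),
      sum_sub_distrib, sum_const, nsmul_eq_mul]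
    ring
  rw [kuramotoMean, hsum, hcard]
  field_simp

theorem isFreqFixedPoint_induce_insert_iff {G : SimpleGraph V} {ω : V → ℝ} {k : ℝ} {ν : V}
    {S : Finset V} (hν : ν ∉ S) (hclosed : ∀ i ∈ S, ∀ j, G.Adj i j → j ∈ insert ν S)
    (Φ : V → ℝ) :
    IsFreqFixedPoint (G.induce (insert ν S : Finset V)) (branchFrequency ω ν S) k
        (fun x => Φ x) ↔
      ∀ i ∈ S, ω i - kuramotoMean ω +
        k * ∑ j ∈ univ.filter (G.Adj i), Real.sin (Φ j - Φ i) = 0 := by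
  have hequation : ∀ i (hi : i ∈ insert ν S), i ∈ S →
      branchFrequency ω ν S ⟨i, hi⟩ - kuramotoMean (branchFrequency ω ν S) +
        k * ∑ j ∈ univ.filter ((G.induce (insert ν S : Finset V)).Adj ⟨i, hi⟩),
          Real.sin (Φ j - Φ i) =
      ω i - kuramotoMean ω + k * ∑ j ∈ univ.filter (G.Adj i), Real.sin (Φ j - Φ i) := by
    intro i hi hiS
    have hneighbors : (insert ν S).filter (G.Adj i) = univ.filter (G.Adj i) := by
      ext j
      simpa using hclosed i hiS j
    rw [kuramotoMean_branchFrequency ω hν,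
      sum_filter_induce_adj G _ ⟨i, hi⟩ fun j => Real.sin (Φ j - Φ i), hneighbors, branchFrequency,
      if_neg (ne_of_mem_of_not_mem hiS hν)]
  constructor
  · intro h i hiS
    rw [← hequation i (mem_insert_of_mem hiS) hiS]
    exact h _
  · intro h
    refine isFreqFixedPoint_of_forall_ne _ _ _ _ ⟨ν, mem_insert_self ν S⟩ ?_
    rintro ⟨i, hi⟩ hne
    have hiS : i ∈ S := (mem_insert.mp hi).resolve_left fun h => hne (Subtype.ext h)
    exact (hequation i hi hiS).trans (h i hiS)

end InducedSubgraph

theorem exists_restrict_eq_of_agree {α β : Type*} {A B : Set α} (f : A → β) (g : B → β)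
    (hcover : ∀ x, x ∈ A ∨ x ∈ B)
    (hagree : ∀ x (ha : x ∈ A) (hb : x ∈ B), f ⟨x, ha⟩ = g ⟨x, hb⟩) :
    ∃ Φ : α → β, (fun x : A => Φ x) = f ∧ (fun x : B => Φ x) = g := by
  classical
  refine ⟨fun x => if ha : x ∈ A then f ⟨x, ha⟩ else g ⟨x, (hcover x).resolve_left ha⟩,
    funext fun x => dif_pos x.2, funext fun ⟨x, hb⟩ => ?_⟩
  by_cases ha : x ∈ A
  · exact (dif_pos ha).trans (hagree x ha hb)
  · exact dif_neg ha

section Cut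

variable {V : Type*} [DecidableEq V] {ν : V} {S S' : Finset V}

theorem mem_insert_or_mem_insert (hpart : ∀ i, i ≠ ν → (i ∈ S ∨ i ∈ S')) (i : V) :
    i ∈ insert ν S ∨ i ∈ insert ν S' := by
  by_cases hi : i = ν
  · exact .inl (hi ▸ mem_insert_self ν S)
  · exact (hpart i hi).imp mem_insert_of_mem mem_insert_of_mem

theorem eq_of_mem_insert_of_mem_insert (hdisj : Disjoint S S') {i : V} (hi : i ∈ insert ν S)
    (hi' : i ∈ insert ν S') : i = ν := by
  have hmem := mem_inter.mpr ⟨hi, hi'⟩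
  rwa [← insert_inter_distrib, disjoint_iff_inter_eq_empty.mp hdisj, insert_empty,
    mem_singleton] at hmem

theorem mem_insert_of_adj {G : SimpleGraph V} (hpart : ∀ i, i ≠ ν → (i ∈ S ∨ i ∈ S'))
    (hcut : ∀ i ∈ S, ∀ j ∈ S', ¬ G.Adj i j) {i j : V} (hi : i ∈ S) (hij : G.Adj i j) :
    j ∈ insert ν S := by
  by_cases hj : j = ν
  · exact hj ▸ mem_insert_self ν S
  · exact mem_insert_of_mem ((hpart j hj).resolve_right (hcut i hi j · hij))

end Cut

theorem cut_vertex_fixed_point_general {V : Type*} [Fintype V] [DecidableEq V]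
    (G : SimpleGraph V) (ω : V → ℝ) (ν₁ : V) (S S' : Finset V)
    (hdisj : Disjoint S S')
    (hν₁S : ν₁ ∉ S) (hν₁S' : ν₁ ∉ S')
    (hpart : ∀ i, i ≠ ν₁ → (i ∈ S ∨ i ∈ S'))
    (hcut : ∀ i ∈ S, ∀ j ∈ S', ¬ G.Adj i j)
    (k : ℝ) :
    (∃ φ, IsFreqFixedPoint G ω k φ) ↔
      ((∃ φ₁, IsFreqFixedPoint (G.induce (↑(insert ν₁ S) : Set V))
          (fun i => if (i : V) = ν₁ then
              kuramotoMean ω - ∑ j ∈ S, (ω j - kuramotoMean ω)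
            else ω i) k φ₁) ∧
       (∃ φ₂, IsFreqFixedPoint (G.induce (↑(insert ν₁ S') : Set V))
          (fun i => if (i : V) = ν₁ then
              kuramotoMean ω - ∑ j ∈ S', (ω j - kuramotoMean ω)
            else ω i) k φ₂)) := by
  have hside := isFreqFixedPoint_induce_insert_iff (G := G) (ω := ω) (k := k) hν₁S
    fun i hi j => mem_insert_of_adj hpart hcut hi
  have hside' := isFreqFixedPoint_induce_insert_iff (G := G) (ω := ω) (k := k) hν₁S'
    fun i hi j => mem_insert_of_adj (fun i hi => (hpart i hi).symm)
      (fun i hi j hj hij => hcut j hj i hi hij.symm) hi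
  constructor
  · rintro ⟨Φ, hΦ⟩
    exact ⟨⟨_, (hside Φ).mpr fun i _ => hΦ i⟩, ⟨_, (hside' Φ).mpr fun i _ => hΦ i⟩⟩
  · rintro ⟨⟨φ₁, h₁⟩, ⟨φ₂, h₂⟩⟩
    set c := φ₁ ⟨ν₁, mem_insert_self ν₁ S⟩ - φ₂ ⟨ν₁, mem_insert_self ν₁ S'⟩
    obtain ⟨Φ, rfl, hΦ₂⟩ := exists_restrict_eq_of_agree φ₁ (fun x => φ₂ x + c)
      (mem_insert_or_mem_insert hpart) fun i hiS hiS' => by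
        obtain rfl := eq_of_mem_insert_of_mem_insert hdisj hiS hiS'
        ring
    have h₂' := h₂.add_const c
    rw [← hΦ₂] at h₂'
    refine ⟨Φ, isFreqFixedPoint_of_forall_ne G ω k Φ ν₁ fun i hi => ?_⟩
    rcases hpart i hi with hiS | hiS'
    · exact (hside Φ).mp h₁ i hiS
    · exact (hside' Φ).mp h₂' i hiS'

/-- Cut-vertex lemma: if `ν₁` is a cut-vertex separating `S` from `S'`, then `G` has a
frequency fixed point at coupling `k` iff both induced Kuramoto graphs `G₁` (on `S ∪ {ν₁}`,
with the frequency of `ν₁` replaced by `ω_x = ω̄ - ∑_{i ∈ S} (ω i - ω̄)`) and `G₂`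
(on `S' ∪ {ν₁}`, with the frequency of `ν₁` replaced by `ω_y = ω̄ - ∑_{i ∈ S'} (ω i - ω̄)`)
have frequency fixed points at coupling `k`. -/
theorem cut_vertex_fixed_point {V : Type*} [Fintype V] [DecidableEq V]
    (G : SimpleGraph V) (ω : V → ℝ) (ν₁ : V) (S S' : Finset V)
    (hdisj : Disjoint S S') (hSne : S.Nonempty) (hS'ne : S'.Nonempty)
    (hν₁S : ν₁ ∉ S) (hν₁S' : ν₁ ∉ S')
    (hpart : ∀ i, i ≠ ν₁ → (i ∈ S ∨ i ∈ S'))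
    (hcut : ∀ i ∈ S, ∀ j ∈ S', ¬ G.Adj i j)
    (k : ℝ) :
    (∃ φ, IsFreqFixedPoint G ω k φ) ↔
      ((∃ φ₁, IsFreqFixedPoint (G.induce (↑(insert ν₁ S) : Set V))
          (fun i => if (i : V) = ν₁ then
              kuramotoMean ω - ∑ j ∈ S, (ω j - kuramotoMean ω)
            else ω i) k φ₁) ∧
       (∃ φ₂, IsFreqFixedPoint (G.induce (↑(insert ν₁ S') : Set V))
          (fun i => if (i : V) = ν₁ then
              kuramotoMean ω - ∑ j ∈ S', (ω j - kuramotoMean ω)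
            else ω i) k φ₂)) :=
  cut_vertex_fixed_point_general G ω ν₁ S S' hdisj hν₁S hν₁S' hpart hcut k
end

section
/- Let T be a finite tree with at least two vertices, equipped with frequencies ω, and let 0 ≤ k ≤ k′. If T has a frequency fixed point at coupling k, then T has a frequency fixed point at coupling k′; that is, for trees the set of nonnegative couplings admitting a frequency fixed point is upward closed. -/
/-
On a forest every function on oriented edges that is antisymmetric is a gradient: sum it along
the path from a chosen root of each component. With `c = k / k' ∈ [0, 1]`, prescribe the phase
difference across the edge `i → j` as `arcsin (c * sin (φ j - φ i))`; this is antisymmetric,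
so it integrates to phases `ψ` with `k' * sin (ψ j - ψ i) = k * sin (φ j - φ i)` on every edge,
which leaves every equation of the fixed point unchanged.
-/

open scoped Classical

namespace SimpleGraph

variable {V : Type*} {G : SimpleGraph V}

namespace Walk

variable {A : Type*} [AddCommMonoid A] (d : V → V → A)

def dartSum {u v : V} (p : G.Walk u v) : A :=
  (p.darts.map fun e => d e.fst e.snd).sum

@[simp]
theorem dartSum_concat {u v w : V} (p : G.Walk u v) (h : G.Adj v w) :
    (p.concat h).dartSum d = p.dartSum d + d v w := by
  simp [dartSum, darts_concat]

@[simp]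
theorem dartSum_copy {u v u' v' : V} (p : G.Walk u v) (hu : u = u') (hv : v = v') :
    (p.copy hu hv).dartSum d = p.dartSum d := by
  simp [dartSum, darts_copy]

end Walk

theorem IsAcyclic.eq_concat_or_eq_concat (hG : G.IsAcyclic) {u v w : V} {p : G.Walk u v}
    {q : G.Walk u w} (hp : p.IsPath) (hq : q.IsPath) (h : G.Adj v w) :
    q = p.concat h ∨ p = q.concat h.symm := by
  by_cases hv : v ∈ q.support
  · exact .inl (hG.path_concat hp hq h hv)
  · exact .inr (hG.path_concat hq hp h.symm
      (hG.mem_support_of_ne_mem_support_of_adj_of_isPath hp hq h hv))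

theorem IsAcyclic.exists_potential {A : Type*} [AddCommGroup A] (hG : G.IsAcyclic)
    (d : V → V → A) (hd : ∀ i j, G.Adj i j → d j i = -d i j) :
    ∃ ψ : V → A, ∀ i j, G.Adj i j → ψ j = ψ i + d i j := by
  let root (v : V) : V := (G.connectedComponentMk v).out
  have hroot (v : V) : G.Reachable (root v) v :=
    ConnectedComponent.exact (Quot.out_eq (G.connectedComponentMk v))
  let path (v : V) : G.Path (root v) v := (hroot v).some.toPath
  refine ⟨fun v => (path v).1.dartSum d, fun i j hij => ?_⟩
  have hr : root j = root i :=
    congrArg Quot.out (ConnectedComponent.connectedComponentMk_eq_of_adj hij.symm)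
  show (path j).1.dartSum d = (path i).1.dartSum d + d i j
  rw [← Walk.dartSum_copy d (path j).1 hr rfl]
  rcases hG.eq_concat_or_eq_concat (path i).2 ((Walk.isPath_copy _ hr rfl).mpr (path j).2) hij
    with h | h
  · rw [h, Walk.dartSum_concat]
  · rw [h, Walk.dartSum_concat, hd i j hij, neg_add_cancel_right]

end SimpleGraph

theorem IsFreqFixedPoint.of_coupling_mul_sin {V : Type*} [Fintype V] {G : SimpleGraph V}
    {ω : V → ℝ} {k k' : ℝ} {φ ψ : V → ℝ} (hφ : IsFreqFixedPoint G ω k φ)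
    (h : ∀ i j, G.Adj i j → k' * Real.sin (ψ j - ψ i) = k * Real.sin (φ j - φ i)) :
    IsFreqFixedPoint G ω k' ψ := by
  intro i
  rw [Finset.mul_sum, Finset.sum_congr rfl fun j hj => h i j (Finset.mem_filter.mp hj).2,
    ← Finset.mul_sum]
  exact hφ i

theorem tree_fixed_point_monotone_general {V : Type*} [Fintype V] (T : SimpleGraph V)
    (hT : T.IsTree) (ω : V → ℝ) (k k' : ℝ)
    (hk : 0 ≤ k) (hkk' : k ≤ k') (h : ∃ φ, IsFreqFixedPoint T ω k φ) :
    ∃ φ, IsFreqFixedPoint T ω k' φ := by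
  obtain ⟨φ, hφ⟩ := h
  have hk' : k' = 0 → k = 0 := fun h0 => le_antisymm (h0 ▸ hkk') hk
  have hc (x : ℝ) : |k / k' * Real.sin x| ≤ 1 := by
    rw [abs_mul, abs_of_nonneg (div_nonneg hk (hk.trans hkk'))]
    exact mul_le_one₀ (div_le_one_of_le₀ hkk' (hk.trans hkk')) (abs_nonneg _)
      (Real.abs_sin_le_one x)
  obtain ⟨ψ, hψ⟩ := hT.isAcyclic.exists_potential
    (fun i j => Real.arcsin (k / k' * Real.sin (φ j - φ i)))
    (fun i j _ => by rw [← neg_sub, Real.sin_neg, mul_neg, Real.arcsin_neg])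
  refine ⟨ψ, hφ.of_coupling_mul_sin fun i j hij => ?_⟩
  rw [hψ i j hij, add_sub_cancel_left, Real.sin_arcsin (abs_le.mp (hc _)).1 (abs_le.mp (hc _)).2,
    ← mul_assoc, mul_div_cancel_of_imp' hk']

/-- For trees, the set of nonnegative couplings admitting a frequency fixed point is
upward closed: if `0 ≤ k ≤ k'` and the tree `T` has a frequency fixed point at coupling
`k`, then it has one at coupling `k'`. -/
theorem tree_fixed_point_monotone {V : Type*} [Fintype V] (T : SimpleGraph V)
    (hT : T.IsTree) (hcard : 2 ≤ Fintype.card V) (ω : V → ℝ) (k k' : ℝ)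
    (hk : 0 ≤ k) (hkk' : k ≤ k') (h : ∃ φ, IsFreqFixedPoint T ω k φ) :
    ∃ φ, IsFreqFixedPoint T ω k' φ :=
  tree_fixed_point_monotone_general T hT ω k k' hk hkk' h
end

section
/- Let ω₁, …, ω_n (n ≥ 1) be real numbers with mean ω̄, maximum ω_max, and minimum ω_min. Then there exists a permutation a of {1, …, n} such that, writing f(j) = Σ_{i=1}^{j} (ω_{a(i)} − ω̄), one has ω_min − ω̄ ≤ f(j) ≤ ω_max − ω̄ for all 1 ≤ j ≤ n (and f(n) = 0). Consequently, for all 1 ≤ m ≤ m + r ≤ n, |f(m + r) − f(m)| ≤ ω_max − ω_min. -/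
/-- The prefix sum `f(j) = ∑_{i=1}^{j} (ω_{a(i)} - ω̄)` of frequency deviations from the
mean, taken along the ordering given by the permutation `a` (positions `0, …, j-1`). -/
noncomputable def prefixDevSum (n : ℕ) (ω : Fin n → ℝ) (a : Equiv.Perm (Fin n))
    (j : ℕ) : ℝ :=
  ∑ i ∈ Finset.univ.filter (fun i : Fin n => (i : ℕ) < j),
    (ω (a i) - (∑ t, ω t) / n)

/-- The maximum `ω_max` of the frequencies. -/
noncomputable def freqMax (n : ℕ) (hn : 1 ≤ n) (ω : Fin n → ℝ) : ℝ :=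
  Finset.univ.sup' ⟨⟨0, hn⟩, Finset.mem_univ _⟩ ω

/-- The minimum `ω_min` of the frequencies. -/
noncomputable def freqMin (n : ℕ) (hn : 1 ≤ n) (ω : Fin n → ℝ) : ℝ :=
  Finset.univ.inf' ⟨⟨0, hn⟩, Finset.mem_univ _⟩ ω

/-!
Greedy ordering. Keep a running sum `c` in `[ω_min - ω̄, ω_max - ω̄]`; the deviations not yet
used sum to `-c`, so if `c ≤ 0` one of them is nonnegative and if `c > 0` one is nonpositive.
Appending it moves the running sum to a value between `c` and that deviation, hence again
inside the interval. Two values in an interval of length `ω_max - ω_min` differ by at most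
that length, which gives the bound on `|f(m + r) - f(m)|`.
-/

open Finset

section GreedyOrdering

variable {α : Type*} {d : α → ℝ} {L U c : ℝ} {s : Finset α}

theorem exists_mem_add_mem_Icc (hs : s.Nonempty) (hd : ∀ i ∈ s, d i ∈ Set.Icc L U)
    (hc : c ∈ Set.Icc L U) (hsum : c + ∑ i ∈ s, d i = 0) :
    ∃ i ∈ s, c + d i ∈ Set.Icc L U := by
  rcases le_or_gt c 0 with hc0 | hc0
  · obtain ⟨i, hi, hdi⟩ : ∃ i ∈ s, 0 ≤ d i :=
      exists_le_of_sum_le (f := fun _ => 0) hs (by rw [sum_const_zero]; linarith)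
    exact ⟨i, hi, by linarith [hc.1], by linarith [(hd i hi).2]⟩
  · obtain ⟨i, hi, hdi⟩ : ∃ i ∈ s, d i ≤ 0 :=
      exists_le_of_sum_le (g := fun _ => 0) hs (by rw [sum_const_zero]; linarith)
    exact ⟨i, hi, by linarith [(hd i hi).1], by linarith [hc.2]⟩

theorem exists_nodup_prefix_sums_mem_Icc [DecidableEq α] (hd : ∀ i ∈ s, d i ∈ Set.Icc L U)
    (hc : c ∈ Set.Icc L U) (hsum : c + ∑ i ∈ s, d i = 0) :
    ∃ l : List α, l.Nodup ∧ l.toFinset = s ∧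
      ∀ m, c + ((l.take m).map d).sum ∈ Set.Icc L U := by
  induction s using Finset.strongInduction generalizing c with
  | H s ih =>
  rcases s.eq_empty_or_nonempty with rfl | hs
  · exact ⟨[], List.nodup_nil, rfl, by simpa using hc⟩
  obtain ⟨i, hi, hci⟩ := exists_mem_add_mem_Icc hs hd hc hsum
  obtain ⟨l, hl, hls, hpre⟩ := ih (s.erase i) (erase_ssubset hi)
    (fun j hj => hd j (mem_of_mem_erase hj)) hci
    (by rw [add_assoc, add_sum_erase s d hi, hsum])
  refine ⟨i :: l, List.nodup_cons.2 ⟨by simp [← List.mem_toFinset, hls], hl⟩,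
    by simp [hls, insert_erase hi], fun m => ?_⟩
  cases m with
  | zero => simpa using hc
  | succ m => simpa [add_assoc] using hpre m

theorem zero_mem_Icc_of_sum_eq_zero (hs : s.Nonempty) (hd : ∀ i ∈ s, d i ∈ Set.Icc L U)
    (hsum : ∑ i ∈ s, d i = 0) : (0 : ℝ) ∈ Set.Icc L U := by
  obtain ⟨i, hi, hdi⟩ : ∃ i ∈ s, d i ≤ 0 :=
    exists_le_of_sum_le (g := fun _ => 0) hs (by rw [sum_const_zero, hsum])
  obtain ⟨j, hj, hdj⟩ : ∃ j ∈ s, 0 ≤ d j :=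
    exists_le_of_sum_le (f := fun _ => 0) hs (by rw [sum_const_zero, hsum])
  exact ⟨(hd i hi).1.trans hdi, hdj.trans (hd j hj).2⟩

end GreedyOrdering

theorem Equiv.Perm.exists_ofFn_eq {n : ℕ} {l : List (Fin n)} (hl : l.Nodup)
    (hmem : ∀ i, i ∈ l) :
    ∃ a : Equiv.Perm (Fin n), List.ofFn a = l := by
  set e := hl.getEquivOfForallMemList l hmem
  have hlen : l.length = n := by simpa using Fintype.card_congr e
  refine ⟨(finCongr hlen.symm).trans e, ?_⟩
  rw [List.ofFn_congr hlen.symm]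
  exact List.ofFn_getElem

variable {n : ℕ} (ω : Fin n → ℝ)

theorem prefixDevSum_eq_sum_take (a : Equiv.Perm (Fin n)) (j : ℕ) :
    prefixDevSum n ω a j =
      (((List.ofFn a).take j).map (fun i => ω i - (∑ t, ω t) / n)).sum := by
  rw [List.map_take, List.map_ofFn, List.sum_take_ofFn]
  rfl

theorem sum_sub_mean_eq_zero : ∑ i, (ω i - (∑ t, ω t) / n) = 0 := by
  rcases eq_or_ne n 0 with rfl | hn
  · simp
  rw [sum_sub_distrib, sum_const, card_univ, Fintype.card_fin, nsmul_eq_mul,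
    mul_div_cancel₀ _ (Nat.cast_ne_zero.2 hn), sub_self]

theorem sub_mean_mem_Icc (hn : 1 ≤ n) (i : Fin n) :
    ω i - (∑ t, ω t) / n ∈
      Set.Icc (freqMin n hn ω - (∑ t, ω t) / n) (freqMax n hn ω - (∑ t, ω t) / n) :=
  ⟨sub_le_sub_right (inf'_le ω (mem_univ i)) _, sub_le_sub_right (le_sup' ω (mem_univ i)) _⟩

/-- Rearrangement with bounded prefix sums: for any reals `ω₁, …, ω_n` (`n ≥ 1`) with
mean `ω̄`, there is a permutation `a` such that every prefix sum
`f(j) = ∑_{i=1}^{j} (ω_{a(i)} - ω̄)` satisfies `ω_min - ω̄ ≤ f(j) ≤ ω_max - ω̄`, with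
`f(n) = 0`; consequently `|f(m+r) - f(m)| ≤ ω_max - ω_min` whenever
`1 ≤ m ≤ m + r ≤ n`. -/
theorem rearrangement_bounded_prefix_sums (n : ℕ) (hn : 1 ≤ n) (ω : Fin n → ℝ) :
    ∃ a : Equiv.Perm (Fin n),
      (∀ j : ℕ, 1 ≤ j → j ≤ n →
          freqMin n hn ω - (∑ t, ω t) / n ≤ prefixDevSum n ω a j ∧
          prefixDevSum n ω a j ≤ freqMax n hn ω - (∑ t, ω t) / n) ∧
      prefixDevSum n ω a n = 0 ∧
      (∀ m r : ℕ, 1 ≤ m → m + r ≤ n →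
          |prefixDevSum n ω a (m + r) - prefixDevSum n ω a m| ≤
            freqMax n hn ω - freqMin n hn ω) := by
  set μ := (∑ t, ω t) / n
  have hdev : ∀ i ∈ univ, ω i - μ ∈ Set.Icc (freqMin n hn ω - μ) (freqMax n hn ω - μ) :=
    fun i _ => sub_mean_mem_Icc ω hn i
  have hsum : ∑ i, (ω i - μ) = 0 := sum_sub_mean_eq_zero ω
  obtain ⟨l, hl, hlu, hpre⟩ := exists_nodup_prefix_sums_mem_Icc hdev
    (zero_mem_Icc_of_sum_eq_zero ⟨⟨0, hn⟩, mem_univ _⟩ hdev hsum) (by rw [zero_add, hsum])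
  obtain ⟨a, rfl⟩ := Equiv.Perm.exists_ofFn_eq hl fun i => by simp [← List.mem_toFinset, hlu]
  have hbound :
      ∀ j, prefixDevSum n ω a j ∈ Set.Icc (freqMin n hn ω - μ) (freqMax n hn ω - μ) :=
    fun j => by simpa [prefixDevSum_eq_sum_take] using hpre j
  refine ⟨a, fun j _ _ => hbound j, ?_, fun m r _ _ => ?_⟩
  · rw [prefixDevSum_eq_sum_take, List.take_of_length_le (by simp), ← List.sum_toFinset _ hl,
      hlu, hsum]
  · simpa using
      abs_sub_le_of_le_of_le (hbound (m + r)).1 (hbound (m + r)).2 (hbound m).1 (hbound m).2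
end

section
/- Let T be a finite tree on n ≥ 2 vertices and let ω₁, …, ω_n ∈ ℝ be a collection of natural frequencies, with maximum ω_max and minimum ω_min. Then there exists a bijective assignment a of the frequencies ω₁, …, ω_n to the vertices of T such that the resulting Kuramoto tree T^a has critical coupling k_c(T^a) ≤ ω_max − ω_min; equivalently, T^a has a frequency fixed point at every coupling k ≥ ω_max − ω_min. -/
open scoped Classical

/-!
Root the tree and let `x` be the centred frequencies `ω - ω̄`. A fixed point at coupling `k`
exists as soon as every subtree sum `S v` of `x` satisfies `|S v| ≤ k`: take the phase difference
across the edge from the parent of `v` to `v` to be `arcsin (S v / k)`, so that this edge carries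
the flow `S v`, and the balance at each vertex is the identity `S v = x v + ∑_{c child of v} S c`.

It remains to place the frequencies so that all subtree sums are at most `ω_max - ω_min`. In a
depth-first order of the vertices every subtree is a contiguous block. The centred frequencies
can be listed so that all their partial sums stay in `[ω_min - ω̄, ω_max - ω̄]`: greedily append
a value whose sign is opposite to the current partial sum. Giving the `i`-th value to the `i`-th
vertex makes every subtree sum a difference of two partial sums.
-/

open Finset

theorem List.IsPrefix.of_le_of_le {α : Type*} [LinearOrder α] {p l₁ l₂ l₃ : List α}
    (h₁ : p <+: l₁) (h₃ : p <+: l₃) (h₁₂ : l₁ ≤ l₂) (h₂₃ : l₂ ≤ l₃) : p <+: l₂ := by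
  induction p generalizing l₁ l₂ l₃ with
  | nil => exact List.nil_prefix
  | cons a p ih =>
    rcases h₁₂.eq_or_lt with rfl | h₁₂
    · exact h₁
    rcases h₂₃.eq_or_lt with rfl | h₂₃
    · exact h₃
    obtain ⟨s₁, rfl⟩ := h₁
    obtain ⟨s₃, rfl⟩ := h₃
    obtain _ | ⟨b, l₂⟩ := l₂
    · simp at h₁₂
    rw [List.cons_append, List.cons_lt_cons_iff] at h₁₂ h₂₃
    obtain ⟨rfl, h₁₂, h₂₃⟩ : a = b ∧ p ++ s₁ < l₂ ∧ l₂ < p ++ s₃ := by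
      rcases h₁₂ with h | ⟨rfl, h⟩ <;> rcases h₂₃ with h' | ⟨_, h'⟩ <;>
        first | exact ⟨rfl, h, h'⟩ | (exfalso; order)
    exact List.cons_prefix_cons.2
      ⟨rfl, ih (List.prefix_append _ _) (List.prefix_append _ _) h₁₂.le h₂₃.le⟩

section PartialSums

variable {R : Type*} [CommRing R] [LinearOrder R] [IsStrictOrderedRing R]

lemma add_mem_Icc_of_mul_nonpos {A B c y : R} (hc : c ∈ Set.Icc A B) (hy : y ∈ Set.Icc A B)
    (h : c * y ≤ 0) : c + y ∈ Set.Icc A B := by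
  rcases mul_nonpos_iff.1 h with ⟨_, _⟩ | ⟨_, _⟩ <;>
    exact ⟨by linarith [hc.1, hy.1], by linarith [hc.2, hy.2]⟩

theorem List.exists_perm_add_sum_take_mem_Icc {α : Type*} (w : α → R) {A B : R} {l : List α}
    {c : R} (hc : c ∈ Set.Icc A B) (hw : ∀ x ∈ l, w x ∈ Set.Icc A B)
    (hsum : c + (l.map w).sum = 0) :
    ∃ l' : List α, l'.Perm l ∧ ∀ m, c + ((l'.take m).map w).sum ∈ Set.Icc A B := by
  induction hn : l.length generalizing l c with
  | zero => exact ⟨l, List.Perm.refl l, fun m => by simpa [List.length_eq_zero_iff.1 hn] using hc⟩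
  | succ n ih =>
    obtain ⟨x, hx, hcx⟩ : ∃ x ∈ l, c * w x ≤ 0 := by
      by_contra! h
      have hpos : 0 < c * (l.map w).sum := by
        rw [← List.sum_map_mul_left]
        exact List.sum_pos _ (by simpa using h) (by simpa using List.ne_nil_of_length_eq_add_one hn)
      rw [show (l.map w).sum = -c by linear_combination hsum] at hpos
      linarith [mul_self_nonneg c]
    have hperm := List.perm_cons_erase hx
    obtain ⟨l', hl', hsums⟩ := ih (add_mem_Icc_of_mul_nonpos hc (hw x hx) hcx)
      (fun y hy => hw y (List.mem_of_mem_erase hy))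
      (by rw [(hperm.map w).sum_eq] at hsum; simpa [add_assoc] using hsum)
      (by simp [List.length_erase_of_mem hx, hn])
    refine ⟨x :: l', (hl'.cons x).trans hperm.symm, fun m => ?_⟩
    cases m with
    | zero => simpa using hc
    | succ m => simpa [add_assoc] using hsums m

theorem exists_equiv_fin_sum_lt_mem_Icc {α : Type*} [Fintype α] (w : α → R) {A B : R}
    (h0 : (0 : R) ∈ Set.Icc A B) (hw : ∀ x, w x ∈ Set.Icc A B) (hsum : ∑ x, w x = 0) :
    ∃ γ : Fin (Fintype.card α) ≃ α, ∀ m : ℕ, ∑ i with i.val < m, w (γ i) ∈ Set.Icc A B := by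
  obtain ⟨l, hl, hsums⟩ := List.exists_perm_add_sum_take_mem_Icc w (l := univ.toList) h0
    (fun x _ => hw x) (by rw [sum_map_toList, hsum, zero_add])
  have hlen : l.length = Fintype.card α := hl.length_eq.trans (length_toList _)
  let γ := (finCongr hlen.symm).trans
    ((hl.nodup_iff.2 (nodup_toList _)).getEquivOfForallMemList l
      fun x => hl.mem_iff.2 (mem_toList.2 (mem_univ x)))
  have hγ : List.ofFn (fun i => w (γ i)) = l.map w :=
    List.ext_getElem (by simp [hlen]) fun i _ _ => by simp [γ]
  refine ⟨γ, fun m => ?_⟩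
  rw [← List.sum_take_ofFn, hγ, ← List.map_take, ← zero_add (List.sum _)]
  exact hsums m

lemma abs_sum_filter_mem_Ico_le {n : ℕ} (f : Fin n → R) {A B : R}
    (hf : ∀ m : ℕ, ∑ i with i.val < m, f i ∈ Set.Icc A B) (a b : ℕ) :
    |∑ i with a ≤ i.val ∧ i.val < b, f i| ≤ B - A := by
  have hsplit : ∑ i with a ≤ i.val ∧ i.val < b, f i =
      ∑ i with i.val < b, f i - ∑ i with i.val < min a b, f i := by
    rw [eq_sub_iff_add_eq, ← sum_union (disjoint_filter.2 fun i _ h₁ h₂ => by omega)]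
    congr 1
    ext i
    simp only [mem_union, mem_filter, mem_univ, true_and]
    omega
  rw [hsplit, abs_sub_le_iff]
  constructor <;> linarith [(hf b).1, (hf b).2, (hf (min a b)).1, (hf (min a b)).2]

end PartialSums

lemma mul_sin_arcsin_div {s k : ℝ} (h : |s| ≤ k) : k * Real.sin (Real.arcsin (s / k)) = s := by
  rcases (abs_nonneg s).trans h |>.eq_or_lt with rfl | hk
  · simp [abs_nonpos_iff.1 h]
  have hsk : |s / k| ≤ 1 := by rwa [abs_div, abs_of_pos hk, div_le_one hk]
  rw [Real.sin_arcsin (abs_le.1 hsk).1 (abs_le.1 hsk).2, mul_div_cancel₀ _ hk.ne']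

/-- A rooted tree given by its parent map. `depth` may be any function that decreases along
`parent`; it only makes the chains of parents well founded. -/
structure ParentTree (V : Type*) where
  root : V
  parent : V → V
  depth : V → ℕ
  depth_parent_lt {v : V} : v ≠ root → depth (parent v) < depth v

namespace ParentTree

variable {V : Type*} (t : ParentTree V)

def graph : SimpleGraph V where
  Adj u v := (u ≠ t.root ∧ t.parent u = v) ∨ (v ≠ t.root ∧ t.parent v = u)
  symm := ⟨fun _ _ => Or.symm⟩
  loopless := ⟨fun v => by
    rintro (⟨hv, h⟩ | ⟨hv, h⟩) <;> exact (t.depth_parent_lt hv).ne (by rw [h])⟩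

noncomputable def path (v : V) : List V :=
  if hv : v = t.root then []
  else
    have := t.depth_parent_lt hv
    path (t.parent v) ++ [v]
termination_by t.depth v

@[elab_as_elim]
theorem induction {P : V → Prop} (root : P t.root)
    (parent : ∀ v, v ≠ t.root → P (t.parent v) → P v) (v : V) : P v :=
  path.induct t P root (fun v hv _ ih => parent v hv ih) v

lemma graph_connected : t.graph.Connected := by
  refine (SimpleGraph.connected_iff_exists_forall_reachable _).2 ⟨t.root, fun v => ?_⟩
  induction v using t.induction with
  | root => rfl
  | parent v hv ih => exact ih.trans (SimpleGraph.Adj.reachable (Or.inr ⟨hv, rfl⟩))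

@[simp] lemma path_root : t.path t.root = [] := by
  rw [path, dif_pos rfl]

lemma path_of_ne_root {v : V} (hv : v ≠ t.root) : t.path v = t.path (t.parent v) ++ [v] := by
  rw [path, dif_neg hv]

lemma path_eq_nil_iff {v : V} : t.path v = [] ↔ v = t.root := by
  refine ⟨fun h => ?_, fun h => h ▸ t.path_root⟩
  by_contra hv
  simp [t.path_of_ne_root hv] at h

lemma getLast?_path {v : V} (hv : v ≠ t.root) : (t.path v).getLast? = some v := by
  rw [t.path_of_ne_root hv, List.getLast?_concat]

lemma path_injective : Function.Injective t.path := by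
  intro u v huv
  by_cases hu : u = t.root
  · rw [hu, path_root, eq_comm, path_eq_nil_iff] at huv
    exact hu.trans huv.symm
  by_cases hv : v = t.root
  · rw [hv, path_root, path_eq_nil_iff] at huv
    exact absurd huv hu
  simpa [t.getLast?_path hu, t.getLast?_path hv] using congrArg List.getLast? huv

lemma exists_path_eq_of_prefix {l : List V} {v : V} (h : l <+: t.path v) :
    ∃ u, t.path u = l := by
  induction v using t.induction with
  | root => exact ⟨t.root, by simpa using h⟩
  | parent v hv ih =>
    rw [t.path_of_ne_root hv] at h
    rcases List.prefix_concat_iff.1 h with h | h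
    · exact ⟨v, by rw [h, t.path_of_ne_root hv]⟩
    · exact ih h

section Subtree

variable [Fintype V]

noncomputable def children (u : V) : Finset V :=
  univ.filter fun c => c ≠ t.root ∧ t.parent c = u

noncomputable def subtree (u : V) : Finset V := univ.filter fun v => t.path u <+: t.path v

@[simp] lemma mem_children {u c : V} : c ∈ t.children u ↔ c ≠ t.root ∧ t.parent c = u := by
  simp [children]

@[simp] lemma mem_subtree {u v : V} : v ∈ t.subtree u ↔ t.path u <+: t.path v := by
  simp [subtree]

lemma self_mem_subtree (u : V) : u ∈ t.subtree u := by simp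

@[simp] lemma subtree_root : t.subtree t.root = univ := by
  ext v; simp

lemma mem_children_iff_path {u c : V} : c ∈ t.children u ↔ t.path c = t.path u ++ [c] := by
  rw [mem_children]
  constructor
  · rintro ⟨hc, rfl⟩
    exact t.path_of_ne_root hc
  · intro h
    have hc : c ≠ t.root := fun hc => by rw [hc, path_root] at h; simp at h
    rw [t.path_of_ne_root hc] at h
    exact ⟨hc, t.path_injective (List.append_cancel_right h)⟩

lemma exists_mem_children_of_prefix {u v : V} (h : t.path u <+: t.path v) (hne : u ≠ v) :
    ∃ c ∈ t.children u, t.path c <+: t.path v := by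
  obtain ⟨s, hs⟩ := h
  obtain _ | ⟨c, s⟩ := s
  · exact absurd (t.path_injective (by simpa using hs)) hne
  have hprefix : t.path u ++ [c] <+: t.path v := ⟨s, by simpa using hs⟩
  obtain ⟨c', hc'⟩ := t.exists_path_eq_of_prefix hprefix
  have hc'root : c' ≠ t.root := fun h => by simp [h] at hc'
  obtain rfl : c' = c := by
    simpa [hc', List.getLast?_concat, eq_comm] using t.getLast?_path hc'root
  exact ⟨c', t.mem_children_iff_path.2 hc', hc' ▸ hprefix⟩

lemma subtree_subset_of_mem_children {u c : V} (hc : c ∈ t.children u) :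
    t.subtree c ⊆ t.subtree u := by
  intro v hv
  rw [mem_subtree] at hv ⊢
  exact (t.mem_children_iff_path.1 hc ▸ List.prefix_append _ _).trans hv

lemma notMem_subtree_of_mem_children {u c : V} (hc : c ∈ t.children u) :
    u ∉ t.subtree c := by
  intro h
  have := (t.mem_subtree.1 h).length_le
  rw [t.mem_children_iff_path.1 hc, List.length_append] at this
  simp at this

lemma pairwiseDisjoint_subtree_children (u : V) :
    (t.children u : Set V).PairwiseDisjoint t.subtree := by
  intro c₁ hc₁ c₂ hc₂ hne
  refine Finset.disjoint_left.2 fun v hv₁ hv₂ => hne ?_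
  rw [mem_subtree, t.mem_children_iff_path.1 hc₁] at hv₁
  rw [mem_subtree, t.mem_children_iff_path.1 hc₂] at hv₂
  simpa using (List.prefix_of_prefix_length_le hv₁ hv₂ (by simp)).eq_of_length (by simp)

lemma subtree_eq_insert_biUnion (u : V) :
    t.subtree u = insert u ((t.children u).biUnion t.subtree) := by
  ext v
  simp only [mem_insert, mem_biUnion]
  constructor
  · intro hv
    by_cases huv : v = u
    · exact Or.inl huv
    obtain ⟨c, hc, hcv⟩ := t.exists_mem_children_of_prefix (t.mem_subtree.1 hv) (Ne.symm huv)
    exact Or.inr ⟨c, hc, t.mem_subtree.2 hcv⟩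
  · rintro (rfl | ⟨c, hc, hv⟩)
    exacts [t.self_mem_subtree v, t.subtree_subset_of_mem_children hc hv]

lemma sum_subtree {M : Type*} [AddCommMonoid M] (x : V → M) (u : V) :
    ∑ v ∈ t.subtree u, x v = x u + ∑ c ∈ t.children u, ∑ v ∈ t.subtree c, x v := by
  rw [t.subtree_eq_insert_biUnion, sum_insert, sum_biUnion (t.pairwiseDisjoint_subtree_children u)]
  simp only [mem_biUnion, not_exists, not_and]
  exact fun c hc => t.notMem_subtree_of_mem_children hc

lemma sum_filter_graph_adj {M : Type*} [AddCommMonoid M] (f : V → M) (i : V) :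
    ∑ j ∈ univ.filter (t.graph.Adj i), f j =
      (if i = t.root then 0 else f (t.parent i)) + ∑ c ∈ t.children i, f c := by
  have hdisj : Disjoint (univ.filter fun j => i ≠ t.root ∧ t.parent i = j) (t.children i) := by
    refine Finset.disjoint_left.2 fun j hj hj' => ?_
    rw [mem_filter] at hj
    rw [mem_children] at hj'
    have hdi := t.depth_parent_lt hj.2.1
    have hdj := t.depth_parent_lt hj'.1
    rw [hj.2.2] at hdi
    rw [hj'.2] at hdj
    omega
  have hAdj : univ.filter (t.graph.Adj i) =
      (univ.filter fun j => i ≠ t.root ∧ t.parent i = j) ∪ t.children i := by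
    ext j
    simp only [children, mem_filter, mem_univ, true_and, mem_union]
    rfl
  rw [hAdj, sum_union hdisj]
  split_ifs with hi <;> simp [hi, sum_filter]

theorem exists_phases_of_abs_sum_subtree_le (x : V → ℝ) (hx : ∑ v, x v = 0) {k : ℝ}
    (hk : ∀ v, v ≠ t.root → |∑ u ∈ t.subtree v, x u| ≤ k) :
    ∃ φ : V → ℝ, ∀ i, x i + k * ∑ j ∈ univ.filter (t.graph.Adj i), Real.sin (φ j - φ i) = 0 := by
  let S v := ∑ u ∈ t.subtree v, x u
  let φ v := ((t.path v).map fun u => Real.arcsin (S u / k)).sum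
  have hedge : ∀ v, v ≠ t.root → k * Real.sin (φ v - φ (t.parent v)) = S v := fun v hv => by
    simp only [φ, t.path_of_ne_root hv, List.map_append, List.sum_append]
    simpa using mul_sin_arcsin_div (hk v hv)
  refine ⟨φ, fun i => ?_⟩
  have hchildren : k * ∑ c ∈ t.children i, Real.sin (φ c - φ i) = ∑ c ∈ t.children i, S c := by
    rw [mul_sum]
    refine sum_congr rfl fun c hc => ?_
    obtain ⟨hcr, rfl⟩ := t.mem_children.1 hc
    exact hedge c hcr
  have hbalance : S i = x i + ∑ c ∈ t.children i, S c := t.sum_subtree x i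
  rw [t.sum_filter_graph_adj, mul_add, hchildren]
  split_ifs with hi
  · subst hi
    have hroot : S t.root = 0 := by simpa [S] using hx
    linarith
  · rw [← neg_sub, Real.sin_neg, mul_neg, hedge i hi]
    linarith

theorem exists_equiv_fin_subtree_eq_interval :
    ∃ e : Fin (Fintype.card V) ≃ V, ∀ u, ∃ a b : ℕ, ∀ i, e i ∈ t.subtree u ↔ a ≤ i ∧ i < b := by
  let e₀ := (Fintype.equivFin V).symm
  let _ : LinearOrder V := LinearOrder.lift' e₀.symm e₀.symm.injective
  -- sorting by root paths in lexicographic order is a depth-first order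
  let e := (Tuple.sort (t.path ∘ e₀)).trans e₀
  have hmono : StrictMono (t.path ∘ e) :=
    (Tuple.monotone_sort (t.path ∘ e₀)).strictMono_of_injective (t.path_injective.comp e.injective)
  refine ⟨e, fun u => ?_⟩
  let D := univ.filter fun i => e i ∈ t.subtree u
  have hu : e.symm u ∈ D := by simp [D]
  refine ⟨e.symm u, D.max' ⟨_, hu⟩ + 1, fun i => ⟨fun hi => ⟨?_, ?_⟩, fun ⟨hi₁, hi₂⟩ => ?_⟩⟩
  · -- core's `List.IsPrefix.le` concludes `¬ l₂ < l₁`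
    have := not_lt.1 (t.mem_subtree.1 hi).le
    rw [← e.apply_symm_apply u] at this
    exact Fin.le_def.1 (hmono.le_iff_le.1 this)
  · exact Nat.lt_succ_of_le (Fin.le_def.1 (D.le_max' i (mem_filter.2 ⟨mem_univ i, hi⟩)))
  · have hmax := (mem_filter.1 (D.max'_mem ⟨_, hu⟩)).2
    rw [t.mem_subtree] at hmax ⊢
    refine List.prefix_rfl.of_le_of_le hmax ?_ ?_
    · simpa using hmono.monotone (Fin.le_def.2 hi₁)
    · exact hmono.monotone (Fin.le_def.2 (Nat.le_of_lt_succ hi₂))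

theorem exists_perm_abs_sum_subtree_le {R : Type*} [CommRing R] [LinearOrder R]
    [IsStrictOrderedRing R] (w : V → R) {A B : R} (h0 : (0 : R) ∈ Set.Icc A B)
    (hw : ∀ v, w v ∈ Set.Icc A B) (hsum : ∑ v, w v = 0) :
    ∃ a : Equiv.Perm V, ∀ u, |∑ v ∈ t.subtree u, w (a v)| ≤ B - A := by
  obtain ⟨e, he⟩ := t.exists_equiv_fin_subtree_eq_interval
  obtain ⟨γ, hγ⟩ := exists_equiv_fin_sum_lt_mem_Icc w h0 hw hsum
  refine ⟨e.symm.trans γ, fun u => ?_⟩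
  obtain ⟨a, b, hab⟩ := he u
  have hreindex :
      ∑ v ∈ t.subtree u, w (γ (e.symm v)) = ∑ i with a ≤ i.val ∧ i.val < b, w (γ i) :=
    sum_equiv e.symm (fun v => by simp [← hab]) fun _ _ => rfl
  simpa [hreindex] using abs_sum_filter_mem_Ico_le _ hγ a b

end Subtree

end ParentTree

lemma SimpleGraph.Connected.exists_adj_dist_add_one {V : Type*} {G : SimpleGraph V}
    (hG : G.Connected) {r v : V} (hv : v ≠ r) :
    ∃ u, G.Adj u v ∧ G.dist r u + 1 = G.dist r v := by
  obtain ⟨p, hp⟩ := hG.exists_walk_length_eq_dist v r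
  cases p with
  | nil => exact absurd rfl hv
  | @cons _ u _ hvu q =>
    refine ⟨u, hvu.symm, le_antisymm ?_ ?_⟩
    · rw [SimpleGraph.dist_comm (u := r), SimpleGraph.dist_comm (u := r), ← hp,
        SimpleGraph.Walk.length_cons]
      exact Nat.add_le_add_right (SimpleGraph.dist_le q) 1
    · calc G.dist r v ≤ G.dist r u + G.dist u v := hG.dist_triangle
        _ = G.dist r u + 1 := by rw [SimpleGraph.dist_eq_one_iff_adj.2 hvu.symm]

theorem SimpleGraph.IsTree.exists_parentTree_graph_eq {V : Type*} {T : SimpleGraph V}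
    (hT : T.IsTree) : ∃ t : ParentTree V, t.graph = T := by
  obtain ⟨r⟩ := hT.connected.nonempty
  choose! parent hparent using fun v (hv : v ≠ r) => hT.connected.exists_adj_dist_add_one hv
  let t : ParentTree V :=
    ⟨r, parent, T.dist r, fun hv => by have := (hparent _ hv).2; omega⟩
  have hle : t.graph ≤ T := by
    rintro u v (⟨hu, rfl⟩ | ⟨hv, rfl⟩)
    exacts [(hparent u hu).1.symm, (hparent v hv).1]
  exact ⟨t, (SimpleGraph.isTree_iff_minimal_connected.1 hT).eq_of_le t.graph_connected hle⟩

lemma kuramotoMean_comp_equiv {V : Type*} [Fintype V] (ω : V → ℝ) (a : Equiv.Perm V) :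
    kuramotoMean (fun i => ω (a i)) = kuramotoMean ω := by
  rw [kuramotoMean, kuramotoMean, Equiv.sum_comp a ω]

lemma sum_sub_kuramotoMean {V : Type*} [Fintype V] (ω : V → ℝ) :
    ∑ i, (ω i - kuramotoMean ω) = 0 := by
  rw [sum_sub_distrib, sum_const, card_univ, nsmul_eq_mul, kuramotoMean]
  rcases eq_or_ne (Fintype.card V) 0 with h | h
  · simp [Fintype.card_eq_zero_iff.1 h]
  · rw [mul_div_cancel₀ _ (Nat.cast_ne_zero.2 h), sub_self]

lemma kuramotoMean_mem_Icc {V : Type*} [Fintype V] (ω : V → ℝ)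
    (hne : (univ : Finset V).Nonempty) :
    kuramotoMean ω ∈ Set.Icc (univ.inf' hne ω) (univ.sup' hne ω) := by
  have hcard : (0 : ℝ) < Fintype.card V := Nat.cast_pos.2 (card_pos.2 hne)
  rw [kuramotoMean, Set.mem_Icc, le_div_iff₀ hcard, div_le_iff₀ hcard]
  constructor
  · simpa [mul_comm] using card_nsmul_le_sum univ ω _ fun v _ => inf'_le ω (mem_univ v)
  · simpa [mul_comm] using sum_le_card_nsmul univ ω _ fun v _ => le_sup' ω (mem_univ v)

/-- Rearrangement theorem for trees: for any finite tree `T` on at least two vertices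
and any collection of natural frequencies `ω`, there is a bijective reassignment `a` of
the frequencies to the vertices for which the resulting Kuramoto tree `T^a` has critical
coupling at most `ω_max - ω_min`; equivalently, `T^a` has a frequency fixed point at
every coupling `k ≥ ω_max - ω_min`. -/
theorem tree_rearrangement_spread_bound {V : Type*} [Fintype V] (T : SimpleGraph V)
    (hT : T.IsTree) (hcard : 2 ≤ Fintype.card V) (ω : V → ℝ) :
    ∃ a : Equiv.Perm V, ∀ k : ℝ,
      Finset.univ.sup' (Finset.univ_nonempty_iff.mpr
          (Fintype.card_pos_iff.mp (by omega))) ω -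
        Finset.univ.inf' (Finset.univ_nonempty_iff.mpr
          (Fintype.card_pos_iff.mp (by omega))) ω ≤ k →
      ∃ φ, IsFreqFixedPoint T (fun i => ω (a i)) k φ := by
  obtain ⟨t, rfl⟩ := hT.exists_parentTree_graph_eq
  have hne : (univ : Finset V).Nonempty := univ_nonempty_iff.2 hT.connected.nonempty
  obtain ⟨hmin, hmax⟩ := kuramotoMean_mem_Icc ω hne
  obtain ⟨a, ha⟩ := t.exists_perm_abs_sum_subtree_le (fun v => ω v - kuramotoMean ω)
    (A := univ.inf' hne ω - kuramotoMean ω) (B := univ.sup' hne ω - kuramotoMean ω)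
    ⟨by linarith, by linarith⟩
    (fun v => ⟨by linarith [inf'_le ω (mem_univ v)], by linarith [le_sup' ω (mem_univ v)]⟩)
    (sum_sub_kuramotoMean ω)
  refine ⟨a, fun k hk => ?_⟩
  have hsum : ∑ v, (ω (a v) - kuramotoMean ω) = 0 := by
    simpa [← kuramotoMean_comp_equiv ω a] using sum_sub_kuramotoMean fun v => ω (a v)
  obtain ⟨φ, hφ⟩ := t.exists_phases_of_abs_sum_subtree_le _ hsum (k := k)
    fun v _ => (ha v).trans (by linarith)
  exact ⟨φ, fun i => by simpa [kuramotoMean_comp_equiv] using hφ i⟩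
end
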